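/- arXiv:2404.17984 — 2 statements merged into one kernel-verified Lean document; each statement's English description precedes it below -/
import Mathlib

section
/- For Shamir sharing with threshold t over Z_P, the map sending a degree-(t-1) polynomial f with f(0) = s to its evaluation vector (f(x_1), ..., f(x_{t-1})) at t-1 fixed distinct nonzero points is a bijection between such polynomials and Z_P^{t-1}. Hence when the other t-1 coefficients are chosen uniformly at random, any t-1 shares are jointly uniform on Z_P^{t-1} regardless of s. -/
/-- The map sending a polynomial `f` of degree at most `t-1` with `f 0 = s`
to its vector of evaluations at `t-1` fixed distinct nonzero points is a
bijection onto `(ZMod P)^(t-1)`; hence any `t-1` shares are jointly uniform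
regardless of the secret `s`. -/
theorem shamir_shares_bijective (P : ℕ) [Fact P.Prime] (t : ℕ)
    (ht : 1 ≤ t) (htP : t ≤ P)
    (x : Fin (t - 1) → ZMod P) (hx : Function.Injective x) (hx0 : ∀ i, x i ≠ 0)
    (s : ZMod P) :
    Function.Bijective
      (fun f : {f : Polynomial (ZMod P) // f.degree < (t : ℕ) ∧ f.eval 0 = s} =>
        fun i : Fin (t - 1) => (f : Polynomial (ZMod P)).eval (x i)) := by
  -- nodes indexed by Option (Fin (t-1)): `none ↦ 0`, `some i ↦ x i`
  set v : Option (Fin (t - 1)) → ZMod P := fun o => o.elim 0 x with hv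
  have hvinj : Function.Injective v := by
    intro a b hab
    cases a with
    | none => cases b with
      | none => rfl
      | some j => exact absurd hab.symm (hx0 j)
    | some i => cases b with
      | none => exact absurd hab (hx0 i)
      | some j => exact congrArg _ (hx hab)
  have hvs : Set.InjOn v (Finset.univ : Finset (Option (Fin (t - 1)))) :=
    hvinj.injOn
  have hcard : (Finset.univ : Finset (Option (Fin (t - 1)))).card = t := by
    simp; omega
  constructor
  · rintro ⟨f, hf, hf0⟩ ⟨g, hg, hg0⟩ h
    simp only at h
    have heq : f = g := by
      apply Polynomial.eq_of_degrees_lt_of_eval_index_eq Finset.univ hvs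
        (by rw [hcard]; exact hf) (by rw [hcard]; exact hg)
      intro i _
      cases i with
      | none => simpa [hv] using hf0.trans hg0.symm
      | some j => exact congrFun h j
    exact Subtype.ext heq
  · intro y
    set r : Option (Fin (t - 1)) → ZMod P := fun o => o.elim s y with hr
    refine ⟨⟨Lagrange.interpolate Finset.univ v r, ?_, ?_⟩, ?_⟩
    · have := Lagrange.degree_interpolate_lt r hvs
      rwa [hcard] at this
    · simpa [hv, hr] using Lagrange.eval_interpolate_at_node r hvs
        (Finset.mem_univ (none : Option (Fin (t - 1))))
    · funext i
      simpa [hv, hr] using Lagrange.eval_interpolate_at_node r hvs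
        (Finset.mem_univ (some i))
end

section
/- Reconstruction with share summing (PPDL-NV correctness): if each client i secret-shares w_i via polynomial f_i of degree ≤ t−1 with f_i(0) = w_i, all using the same evaluation points x_1, ..., x_n, and each client j computes the aggregate share v_j = Σ_i f_i(x_j), then Lagrange interpolation of any t of the pairs (x_j, v_j) at 0 yields Σ_i w_i. -/
open Polynomial

/-- PPDL-NV correctness: if each client `i` shares `w i` via a polynomial `f i`
of degree at most `t-1` with constant term `w i`, all using common distinct
nonzero evaluation points `x 1, ..., x n`, and aggregate shares
`v j = Σ_i f i (x j)` are formed, then Lagrange interpolation at `0` of any `t`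
of the pairs `(x j, v j)` yields `Σ_i w i`. -/
theorem ppdl_nv_reconstruction (P : ℕ) [Fact P.Prime] (N n t : ℕ)
    (ht : 1 ≤ t) (htn : t ≤ n) (hnP : n ≤ P - 1)
    (x : Fin n → ZMod P) (hx : Function.Injective x) (hx0 : ∀ j, x j ≠ 0)
    (w : Fin N → ZMod P) (f : Fin N → Polynomial (ZMod P))
    (hdeg : ∀ i, (f i).degree < (t : ℕ)) (hconst : ∀ i, (f i).eval 0 = w i)
    (v : Fin n → ZMod P) (hv : ∀ j, v j = ∑ i, (f i).eval (x j))
    (S : Finset (Fin n)) (hS : S.card = t) :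
    ∑ j ∈ S, v j * ∏ i ∈ S.erase j, x i / (x i - x j) = ∑ i, w i := by
  set g : Polynomial (ZMod P) := ∑ i, f i with hg
  have hgdeg : g.degree < (S.card : ℕ) := by
    rw [hS]
    exact lt_of_le_of_lt (Polynomial.degree_sum_le _ _)
      (Finset.sup_lt_iff (by exact_mod_cast WithBot.bot_lt_coe t) |>.2
        fun i _ => hdeg i)
  have hinj : Set.InjOn x S := hx.injOn
  have key := Lagrange.eq_interpolate hinj hgdeg
  have hgeval : ∀ j, g.eval (x j) = v j := by
    intro j
    rw [hv, hg, Polynomial.eval_finset_sum]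
  have h0 : g.eval 0 = ∑ i, w i := by
    rw [hg, Polynomial.eval_finset_sum]
    exact Finset.sum_congr rfl fun i _ => hconst i
  calc ∑ j ∈ S, v j * ∏ i ∈ S.erase j, x i / (x i - x j)
      = (Lagrange.interpolate S x fun i => g.eval (x i)).eval 0 := by
        rw [Lagrange.interpolate_apply, Polynomial.eval_finset_sum]
        refine Finset.sum_congr rfl fun j hj => ?_
        rw [Polynomial.eval_mul, Polynomial.eval_C, hgeval]
        congr 1
        rw [Lagrange.basis, Polynomial.eval_prod]
        refine Finset.prod_congr rfl fun i hi => ?_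
        have hne : x j ≠ x i := fun h =>
          (Finset.ne_of_mem_erase hi) (hx h.symm)
        rw [Lagrange.basisDivisor, Polynomial.eval_mul, Polynomial.eval_C,
          Polynomial.eval_sub, Polynomial.eval_X, Polynomial.eval_C]
        rw [zero_sub, ← neg_sub (x i) (x j), inv_neg, neg_mul_neg,
          mul_comm, div_eq_mul_inv]
    _ = g.eval 0 := by rw [← key]
    _ = ∑ i, w i := h0
end
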